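/- Let λ ∈ (0,1) and θ ∈ (0,∞) with θ ≠ 1/2 and θ ≠ 1. Let c be the unique zero of f(c) = (c/((2θ−1+2cθ)(2−2θ−c(2θ−1))))^((1−θ)/(θ−1/2)) − (2θ−1+2cθ)²/(1−λ) in I(θ) and set s̄ = (c/((2θ−1+2cθ)(2−2θ−c(2θ−1))))^(1/(2θ−1)). Then 1/(1+c) + 1/(1 + c/((1−λ)s̄)) = 2θ; equivalently, θ − 1/(1+c) = 1/(1 + c/((1−λ)s̄)) − θ, i.e., the no-trade region in terms of the shadow price is symmetric relative to the Merton proportion θ. -/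

import Mathlib

open Real

/-- The interval `I(θ)` in which the root `c` of `f` is located. -/
noncomputable def noTradeInterval (θ : ℝ) : Set ℝ :=
  if θ < 1/2 then Set.Ioi ((1 - θ)/θ)
  else if θ < 1 then Set.Ioo ((1 - θ)/θ) ((1 - θ)/(θ - 1/2))
  else Set.Ioo ((1 - θ)/θ) 0

/-!
Write `D = 2θ - 1 + 2cθ`, `E = 2 - 2θ - c(2θ - 1)` and `A = c / (D E)`, so that `s̄ = A^(1/(2θ-1))`.
Since `1/(2θ-1) = (1-θ)/(θ-1/2) + 1`, the equation `f(c) = 0` turns the definition of `s̄` into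
`s̄ = D²/(1-λ) · A`, i.e. `(1-λ) s̄ = c D / E`. Hence `1 + c/((1-λ)s̄) = (D + E)/D = (1 + c)/D`, and
the two boundaries add up to `(1 + D)/(1 + c) = 2θ`. All the computation needs is `A > 0` and
`1 + c ≠ 0`, and `c ∈ I(θ)` provides both.
-/

theorem Real.rpow_one_div_eq_rpow_mul_self {a e : ℝ} (ha : 0 < a) (he : e ≠ 0) :
    a ^ (1 / e) = a ^ ((1 - e) / e) * a := by
  rw [← rpow_add_one ha.ne']
  congr 1
  field_simp
  ring

namespace NoTradeRegion

theorem base_pos_of_mem_noTradeInterval {θ c : ℝ} (hθ : 0 < θ) (hθhalf : θ ≠ 1/2)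
    (hcI : c ∈ noTradeInterval θ) :
    0 < c / ((2*θ - 1 + 2*c*θ) * (2 - 2*θ - c*(2*θ - 1))) ∧ 1 < 2*θ - 1 + 2*c*θ ∧ 0 < 1 + c := by
  have hlower : (1 - θ) / θ < c := by
    unfold noTradeInterval at hcI
    split_ifs at hcI
    exacts [hcI, hcI.1, hcI.1]
  have hcθ : 1 - θ < c * θ := by rwa [div_lt_iff₀ hθ] at hlower
  have hD : 1 < 2*θ - 1 + 2*c*θ := by linarith
  have h1c : 0 < 1 + c := by nlinarith
  -- on each piece of `I(θ)`, `c` and `E` have the same sign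
  suffices hcE : 0 < c / (2 - 2*θ - c*(2*θ - 1)) by
    rw [mul_comm, ← div_div]
    exact ⟨div_pos hcE (by linarith), hD, h1c⟩
  unfold noTradeInterval at hcI
  split_ifs at hcI with hθ₁ hθ₂
  · have hc : 0 < c := by nlinarith
    exact div_pos hc (by nlinarith)
  · have hθ₁' : 1/2 < θ := lt_of_le_of_ne (not_lt.mp hθ₁) (Ne.symm hθhalf)
    have hc : 0 < c := by nlinarith
    have hupper : c * (θ - 1/2) < 1 - θ := (lt_div_iff₀ (by linarith)).1 hcI.2
    exact div_pos hc (by nlinarith)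
  · have hθ₂' : 1 ≤ θ := not_lt.mp hθ₂
    have hE : 2 - 2*θ - c*(2*θ - 1) < 0 := by
      nlinarith [mul_lt_mul_of_pos_left hcθ (by linarith : (0:ℝ) < 2*θ - 1)]
    exact div_pos_of_neg_of_neg hcI.2 hE

theorem scaled_shadow_price_eq {lam θ c sbar : ℝ} (hlam : 1 - lam ≠ 0) (hθhalf : θ ≠ 1/2)
    (hA : 0 < c / ((2*θ - 1 + 2*c*θ) * (2 - 2*θ - c*(2*θ - 1))))
    (hfc : (c / ((2*θ - 1 + 2*c*θ) * (2 - 2*θ - c*(2*θ - 1)))) ^ ((1 - θ)/(θ - 1/2))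
        - (2*θ - 1 + 2*c*θ)^2 / (1 - lam) = 0)
    (hsbar : sbar = (c / ((2*θ - 1 + 2*c*θ) * (2 - 2*θ - c*(2*θ - 1)))) ^ (1/(2*θ - 1))) :
    (1 - lam) * sbar = c * (2*θ - 1 + 2*c*θ) / (2 - 2*θ - c*(2*θ - 1)) := by
  set D := 2*θ - 1 + 2*c*θ
  set E := 2 - 2*θ - c*(2*θ - 1)
  have he : 2*θ - 1 ≠ 0 := fun h => hθhalf (by linarith)
  have hexp : (1 - θ)/(θ - 1/2) = (1 - (2*θ - 1))/(2*θ - 1) := by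
    rw [div_eq_div_iff (fun h => hθhalf (by linarith)) he]
    ring
  have hDE : D * E ≠ 0 := fun h => by simp [h] at hA
  have hD : D ≠ 0 := left_ne_zero_of_mul hDE
  have hE : E ≠ 0 := right_ne_zero_of_mul hDE
  rw [hexp, sub_eq_zero] at hfc
  rw [hsbar, rpow_one_div_eq_rpow_mul_self hA he, hfc]
  field_simp

theorem boundaries_add_eq {θ c κ : ℝ} (h1c : 1 + c ≠ 0) (hc : c ≠ 0)
    (hD : 2*θ - 1 + 2*c*θ ≠ 0) (hκ : κ = c * (2*θ - 1 + 2*c*θ) / (2 - 2*θ - c*(2*θ - 1))) :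
    1/(1 + c) + 1/(1 + c/κ) = 2*θ := by
  set D := 2*θ - 1 + 2*c*θ
  set E := 2 - 2*θ - c*(2*θ - 1)
  have hDE : D + E = 1 + c := by ring
  have hupper : 1 + c/κ = (1 + c) / D := by
    rw [hκ, ← hDE]
    field_simp
  rw [hupper, one_div_div, ← add_div, div_eq_iff h1c]
  ring

end NoTradeRegion

open NoTradeRegion in
theorem growth_optimal_no_trade_region_symmetric_general
    (lam θ c sbar : ℝ)
    (hlam : lam ∈ Set.Ioo (0:ℝ) 1) (hθ : 0 < θ) (hθhalf : θ ≠ 1/2)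
    (hcI : c ∈ noTradeInterval θ)
    (hfc : (c / ((2*θ - 1 + 2*c*θ) * (2 - 2*θ - c*(2*θ - 1)))) ^ ((1 - θ)/(θ - 1/2))
        - (2*θ - 1 + 2*c*θ)^2 / (1 - lam) = 0)
    (hsbar : sbar = (c / ((2*θ - 1 + 2*c*θ) * (2 - 2*θ - c*(2*θ - 1)))) ^ (1/(2*θ - 1))) :
    1/(1 + c) + 1/(1 + c/((1 - lam) * sbar)) = 2*θ ∧
      θ - 1/(1 + c) = 1/(1 + c/((1 - lam) * sbar)) - θ := by
  obtain ⟨hA, hD, h1c⟩ := base_pos_of_mem_noTradeInterval hθ hθhalf hcI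
  have hc : c ≠ 0 := by
    rintro rfl
    simp at hA
  have hsum := boundaries_add_eq h1c.ne' hc (zero_lt_one.trans hD).ne'
    (scaled_shadow_price_eq (sub_pos.2 hlam.2).ne' hθhalf hA hfc hsbar)
  exact ⟨hsum, by linarith⟩

theorem growth_optimal_no_trade_region_symmetric
    (lam θ c sbar : ℝ)
    (hlam : lam ∈ Set.Ioo (0:ℝ) 1) (hθ : 0 < θ) (hθhalf : θ ≠ 1/2) (hθone : θ ≠ 1)
    (hcI : c ∈ noTradeInterval θ)
    (hfc : (c / ((2*θ - 1 + 2*c*θ) * (2 - 2*θ - c*(2*θ - 1)))) ^ ((1 - θ)/(θ - 1/2))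
        - (2*θ - 1 + 2*c*θ)^2 / (1 - lam) = 0)
    (hsbar : sbar = (c / ((2*θ - 1 + 2*c*θ) * (2 - 2*θ - c*(2*θ - 1)))) ^ (1/(2*θ - 1))) :
    1/(1 + c) + 1/(1 + c/((1 - lam) * sbar)) = 2*θ ∧
      θ - 1/(1 + c) = 1/(1 + c/((1 - lam) * sbar)) - θ :=
  growth_optimal_no_trade_region_symmetric_general lam θ c sbar hlam hθ hθhalf hcI hfc hsbar
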